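/- G_PNI(X→Y) = 0 if and only if G_NNI(X;Y) = 0; equivalently, if there exists an auxiliary U with I(X;Y|U) > I(X;Y), then there exists an auxiliary U′ independent of X with I(X;Y|U′) > I(X;Y). -/

import Mathlib

open scoped BigOperators Pointwise Classical

noncomputable section

namespace GW

/-- A probability mass function on a finite type. -/
def IsPMF {α : Type} [Fintype α] (p : α → ℝ) : Prop :=
  (∀ a, 0 ≤ p a) ∧ ∑ a, p a = 1

/-- Distribution (pmf) of the random variable `f` under the pmf `p`. -/
def dist {α β : Type} [Fintype α] (p : α → ℝ) (f : α → β) : β → ℝ :=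
  fun b => ∑ a, if f a = b then p a else 0

/-- Shannon entropy (base 2) of the random variable `f` under the pmf `p`. -/
def H {α β : Type} [Fintype α] [Fintype β] (p : α → ℝ) (f : α → β) : ℝ :=
  ∑ b, -(dist p f b * Real.logb 2 (dist p f b))

/-- Mutual information `I(f; g)` under `p`. -/
def I2 {α β γ : Type} [Fintype α] [Fintype β] [Fintype γ]
    (p : α → ℝ) (f : α → β) (g : α → γ) : ℝ :=
  H p f + H p g - H p (fun a => (f a, g a))

/-- Conditional entropy `H(f | g)` under `p`. -/
def Hc {α β γ : Type} [Fintype α] [Fintype β] [Fintype γ]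
    (p : α → ℝ) (f : α → β) (g : α → γ) : ℝ :=
  H p (fun a => (f a, g a)) - H p g

/-- Conditional mutual information `I(f; g | h)` under `p`. -/
def Ic {α β γ δ : Type} [Fintype α] [Fintype β] [Fintype γ] [Fintype δ]
    (p : α → ℝ) (f : α → β) (g : α → γ) (h : α → δ) : ℝ :=
  Hc p f h + Hc p g h - Hc p (fun a => (f a, g a)) h

/-- Independence of the random variables `f` and `g` under `p`. -/
def Indep {α β γ : Type} [Fintype α] (p : α → ℝ) (f : α → β) (g : α → γ) : Prop :=
  ∀ b c, dist p (fun a => (f a, g a)) (b, c) = dist p f b * dist p g c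

/-- `q` is a joint pmf on `X × Y × U` whose `(X,Y)`-marginal is `p`; i.e. `U` is an
auxiliary random variable defined jointly with `(X,Y)` via a conditional pmf `p_{U|XY}`. -/
def IsAux {X Y U : Type} [Fintype X] [Fintype Y] [Fintype U]
    (p : X × Y → ℝ) (q : X × Y × U → ℝ) : Prop :=
  IsPMF q ∧ ∀ x y, (∑ u, q (x, y, u)) = p (x, y)

/-- Coordinate map onto `X`. -/
def cX {X Y U : Type} : X × Y × U → X := fun a => a.1
/-- Coordinate map onto `Y`. -/
def cY {X Y U : Type} : X × Y × U → Y := fun a => a.2.1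
/-- Coordinate map onto `U`. -/
def cU {X Y U : Type} : X × Y × U → U := fun a => a.2.2
/-- Coordinate map onto `X × Y`. -/
def cXY {X Y U : Type} : X × Y × U → X × Y := fun a => (a.1, a.2.1)

/-- The mutual information region `𝓘_{XY}`. -/
def MIRegion {X Y : Type} [Fintype X] [Fintype Y] (p : X × Y → ℝ) : Set (ℝ × ℝ × ℝ) :=
  { v | ∃ (U : Type) (_ : Fintype U) (q : X × Y × U → ℝ), IsAux p q ∧
      v = (I2 q cX cU, I2 q cY cU, I2 q cXY cU) }

/-- The outer region `𝓘ᵒ_{XY}`. -/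
def OuterRegion {X Y : Type} [Fintype X] [Fintype Y] (p : X × Y → ℝ) : Set (ℝ × ℝ × ℝ) :=
  { v | 0 ≤ v.1 ∧ 0 ≤ v.2.1 ∧ v.1 + v.2.1 - v.2.2 ≤ I2 p Prod.fst Prod.snd ∧
        0 ≤ v.2.2 - v.2.1 ∧ v.2.2 - v.2.1 ≤ Hc p Prod.fst Prod.snd ∧
        0 ≤ v.2.2 - v.1 ∧ v.2.2 - v.1 ≤ Hc p Prod.snd Prod.fst }

/-- Maximal interaction information `G_NNI(X; Y)`. -/
def GNNI {X Y : Type} [Fintype X] [Fintype Y] (p : X × Y → ℝ) : ℝ :=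
  sSup { r | ∃ (U : Type) (_ : Fintype U) (q : X × Y × U → ℝ), IsAux p q ∧
      r = Ic q cX cY cU - I2 p Prod.fst Prod.snd }

/-- Asymmetric private interaction information `G_PNI(X → Y)`. -/
def GPNI {X Y : Type} [Fintype X] [Fintype Y] (p : X × Y → ℝ) : ℝ :=
  sSup { r | ∃ (U : Type) (_ : Fintype U) (q : X × Y × U → ℝ), IsAux p q ∧
      Indep q cU cX ∧ r = Ic q cX cY cU - I2 p Prod.fst Prod.snd }

/-- Symmetric private interaction information `G_PPI(X; Y)`. -/
def GPPI {X Y : Type} [Fintype X] [Fintype Y] (p : X × Y → ℝ) : ℝ :=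
  sSup { r | ∃ (U : Type) (_ : Fintype U) (q : X × Y × U → ℝ), IsAux p q ∧
      Indep q cU cX ∧ Indep q cU cY ∧ r = Ic q cX cY cU - I2 p Prod.fst Prod.snd }

/-!
Both suprema are nonnegative (take `U` constant) and `G_PNI ≤ G_NNI`, so everything hinges on
the support of `p`, viewed as a bipartite graph on `X ⊕ Y`.

If the support is a disjoint union of stars, let `C` be the centre of the star containing
`(X, Y)`. On each star one of `X`, `Y` is constant, so it carries exactly the information of `C`
and is determined by the other one; this gives, pointwise on the support,
`I(X;Y|U) - I(X;Y) = -I(C;U)`, hence `G_NNI ≤ 0`.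

Otherwise the support contains a path `x₀ — y₀ — x₁ — y₁`. Let `U` be a fair coin whose bias
given `(X, Y)` is moved in opposite directions at `(x₁, y₀)` and `(x₁, y₁)`, balanced along the
row `x₁`. Then `U` is independent of `X`, but not conditionally on `Y` since `x₀` also meets
`y₀`; so `I(X;Y|U) - I(X;Y) = I(X;U|Y) - I(X;U) = I(X;U|Y) > 0`, hence `G_PNI > 0`.
-/

section Distribution

variable {α β γ : Type} [Fintype α] {p : α → ℝ}

lemma dist_nonneg (hp : ∀ a, 0 ≤ p a) (f : α → β) (b : β) : 0 ≤ dist p f b :=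
  Finset.sum_nonneg fun a _ => by split_ifs <;> simp [hp a]

lemma le_dist_apply (hp : ∀ a, 0 ≤ p a) (f : α → β) (a : α) : p a ≤ dist p f (f a) := by
  simpa [dist] using Finset.single_le_sum (f := fun a' => if f a' = f a then p a' else 0)
    (fun a' _ => by split_ifs <;> simp [hp a']) (Finset.mem_univ a)

lemma dist_apply_pos (hp : ∀ a, 0 ≤ p a) (f : α → β) {a : α} (ha : p a ≠ 0) :
    0 < dist p f (f a) :=
  (lt_of_le_of_ne (hp a) (Ne.symm ha)).trans_le (le_dist_apply hp f a)

lemma dist_congr {f : α → β} {g : α → γ} {b : β} {c : γ}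
    (h : ∀ a, p a ≠ 0 → (f a = b ↔ g a = c)) : dist p f b = dist p g c :=
  Finset.sum_congr rfl fun a _ => by
    by_cases ha : p a = 0
    · simp [ha]
    · simp only [h a ha]

lemma dist_mono (hp : ∀ a, 0 ≤ p a) {f : α → β} {g : α → γ} {b : β} {c : γ}
    (h : ∀ a, f a = b → g a = c) : dist p f b ≤ dist p g c :=
  Finset.sum_le_sum fun a _ => by
    by_cases hb : f a = b
    · simp [hb, h a hb]
    · split_ifs <;> simp [hp a]

lemma sum_dist_mul [Fintype β] (f : α → β) (ψ : β → ℝ) :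
    ∑ b, dist p f b * ψ b = ∑ a, p a * ψ (f a) := by
  simp only [dist, Finset.sum_mul, ite_mul, zero_mul]
  rw [Finset.sum_comm]
  simp

lemma sum_dist [Fintype β] (f : α → β) : ∑ b, dist p f b = ∑ a, p a := by
  simpa using sum_dist_mul (p := p) f (fun _ => 1)

lemma dist_comp [Fintype β] (f : α → β) (g : β → γ) :
    dist p (fun a => g (f a)) = dist (dist p f) g := by
  funext c
  simpa [dist] using (sum_dist_mul (p := p) f (fun b => if g b = c then 1 else 0)).symm

lemma sum_dist_pair_fst [Fintype β] (f : α → β) (g : α → γ) (c : γ) :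
    ∑ b, dist p (fun a => (f a, g a)) (b, c) = dist p g c := by
  simp only [dist, Prod.mk.injEq]
  rw [Finset.sum_comm]
  refine Finset.sum_congr rfl fun a _ => ?_
  by_cases hc : g a = c <;> simp [hc]

lemma sum_dist_pair_snd [Fintype γ] (f : α → β) (g : α → γ) (b : β) :
    ∑ c, dist p (fun a => (f a, g a)) (b, c) = dist p f b := by
  simp only [dist, Prod.mk.injEq]
  rw [Finset.sum_comm]
  refine Finset.sum_congr rfl fun a _ => ?_
  by_cases hb : f a = b <;> simp [hb]

lemma dist_snd_apply {α β : Type} [Fintype α] [Fintype β] (p : α × β → ℝ) (b : β) :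
    dist p Prod.snd b = ∑ a, p (a, b) := by
  simp only [dist, Fintype.sum_prod_type]
  simp

lemma Indep.symm {f : α → β} {g : α → γ} (h : Indep p f g) : Indep p g f := fun c b => by
  rw [mul_comm, ← h b c]
  exact dist_congr fun a _ => by simp only [Prod.mk.injEq, and_comm]

lemma dist_of_subsingleton [Subsingleton β] (f : α → β) (b : β) : dist p f b = ∑ a, p a := by
  simp [dist, Subsingleton.elim _ b]

lemma indep_of_subsingleton [Subsingleton β] (hp : ∑ a, p a = 1) (f : α → β) (g : α → γ) :
    Indep p f g := fun b c => by
  rw [dist_of_subsingleton f, hp, one_mul]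
  exact dist_congr fun a _ => by simp [Subsingleton.elim (f a) b]

end Distribution

section Entropy

variable {α β γ : Type} [Fintype α] {p : α → ℝ}

def surprisal (p : α → ℝ) (f : α → β) (a : α) : ℝ :=
  -Real.logb 2 (dist p f (f a))

lemma H_eq_sum_surprisal [Fintype β] (p : α → ℝ) (f : α → β) :
    H p f = ∑ a, p a * surprisal p f a := by
  simp only [surprisal]
  rw [← sum_dist_mul f (fun b => -Real.logb 2 (dist p f b))]
  simp only [H, mul_neg]

lemma surprisal_congr {f : α → β} {g : α → γ} {a : α}
    (h : ∀ a', p a' ≠ 0 → (f a' = f a ↔ g a' = g a)) : surprisal p f a = surprisal p g a := by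
  rw [surprisal, surprisal, dist_congr h]

lemma sum_mul_congr_of_ne_zero {u v : α → ℝ} (h : ∀ a, p a ≠ 0 → u a = v a) :
    ∑ a, p a * u a = ∑ a, p a * v a :=
  Finset.sum_congr rfl fun a _ => by
    by_cases ha : p a = 0
    · simp [ha]
    · rw [h a ha]

lemma H_congr [Fintype β] [Fintype γ] {f : α → β} {g : α → γ}
    (h : ∀ a, p a ≠ 0 → ∀ a', p a' ≠ 0 → (f a' = f a ↔ g a' = g a)) : H p f = H p g := by
  simp only [H_eq_sum_surprisal]
  exact sum_mul_congr_of_ne_zero fun a ha => surprisal_congr (h a ha)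

lemma H_comp [Fintype β] [Fintype γ] (f : α → β) (g : β → γ) :
    H p (fun a => g (f a)) = H (dist p f) g := by
  simp only [H, dist_comp]

lemma H_comp_le [Fintype β] [Fintype γ] (hp : ∀ a, 0 ≤ p a) (f : α → β) (g : β → γ) :
    H p (fun a => g (f a)) ≤ H p f := by
  simp only [H_eq_sum_surprisal]
  refine Finset.sum_le_sum fun a _ => ?_
  by_cases ha : p a = 0
  · simp [ha]
  · exact mul_le_mul_of_nonneg_left (neg_le_neg (Real.logb_le_logb_of_le one_lt_two
      (dist_apply_pos hp f ha) (dist_mono hp fun a' h => by rw [h]))) (hp a)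

lemma H_eq_zero_of_subsingleton [Fintype β] [Subsingleton β] (hp : ∑ a, p a = 1) (f : α → β) :
    H p f = 0 := by
  simp [H_eq_sum_surprisal, surprisal, dist_of_subsingleton, hp]

end Entropy

section Gibbs

lemma mul_logb_div_le {x y : ℝ} (hx : 0 ≤ x) (hy : 0 ≤ y) (hyx : y = 0 → x = 0) :
    x * Real.logb 2 (y / x) ≤ (y - x) / Real.log 2 := by
  have hlog : 0 < Real.log 2 := Real.log_pos one_lt_two
  rcases hx.eq_or_lt with rfl | hx
  · simpa using div_nonneg hy hlog.le
  have hy : 0 < y := hy.lt_of_ne fun h => hx.ne' (hyx h.symm)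
  rw [Real.logb, mul_div_assoc', div_le_div_iff_of_pos_right hlog]
  calc x * Real.log (y / x) ≤ x * (y / x - 1) :=
        mul_le_mul_of_nonneg_left (Real.log_le_sub_one_of_pos (div_pos hy hx)) hx.le
    _ = y - x := by field_simp

lemma mul_logb_div_lt {x y : ℝ} (hx : 0 < x) (hy : 0 < y) (hxy : x ≠ y) :
    x * Real.logb 2 (y / x) < (y - x) / Real.log 2 := by
  have hlog : 0 < Real.log 2 := Real.log_pos one_lt_two
  rw [Real.logb, mul_div_assoc', div_lt_div_iff_of_pos_right hlog]
  calc x * Real.log (y / x) < x * (y / x - 1) :=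
        mul_lt_mul_of_pos_left (Real.log_lt_sub_one_of_pos (div_pos hy hx)
          (by rwa [Ne, div_eq_one_iff_eq hx.ne', eq_comm])) hx
    _ = y - x := by field_simp

variable {ι : Type} [Fintype ι] {a b : ι → ℝ}

lemma sum_sub_div_log_two_nonpos (hs : ∑ i, b i ≤ ∑ i, a i) :
    ∑ i, (b i - a i) / Real.log 2 ≤ 0 := by
  rw [← Finset.sum_div, Finset.sum_sub_distrib]
  exact div_nonpos_of_nonpos_of_nonneg (sub_nonpos.2 hs) (Real.log_pos one_lt_two).le

lemma gibbs_le (ha : ∀ i, 0 ≤ a i) (hb : ∀ i, 0 ≤ b i)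
    (hba : ∀ i, b i = 0 → a i = 0) (hs : ∑ i, b i ≤ ∑ i, a i) :
    ∑ i, a i * Real.logb 2 (b i / a i) ≤ 0 :=
  (Finset.sum_le_sum fun i _ => mul_logb_div_le (ha i) (hb i) (hba i)).trans
    (sum_sub_div_log_two_nonpos hs)

lemma gibbs_lt (ha : ∀ i, 0 ≤ a i) (hb : ∀ i, 0 ≤ b i)
    (hba : ∀ i, b i = 0 → a i = 0) (hs : ∑ i, b i ≤ ∑ i, a i)
    {i₀ : ι} (hi₀ : a i₀ ≠ 0) (hne : a i₀ ≠ b i₀) :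
    ∑ i, a i * Real.logb 2 (b i / a i) < 0 := by
  have ha₀ : 0 < a i₀ := (ha i₀).lt_of_ne (Ne.symm hi₀)
  have hb₀ : 0 < b i₀ := (hb i₀).lt_of_ne fun h => hi₀ (hba i₀ h.symm)
  refine lt_of_lt_of_le ?_ (sum_sub_div_log_two_nonpos hs)
  exact Finset.sum_lt_sum (fun i _ => mul_logb_div_le (ha i) (hb i) (hba i))
    ⟨i₀, Finset.mem_univ _, mul_logb_div_lt ha₀ hb₀ hne⟩

end Gibbs

section MutualInformation

variable {α β γ δ ε : Type} [Fintype α] {p : α → ℝ}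

def pmi (p : α → ℝ) (f : α → β) (g : α → γ) (a : α) : ℝ :=
  surprisal p f a + surprisal p g a - surprisal p (fun a => (f a, g a)) a

def pcmi (p : α → ℝ) (f : α → β) (g : α → γ) (h : α → δ) (a : α) : ℝ :=
  surprisal p (fun a => (f a, h a)) a + surprisal p (fun a => (g a, h a)) a
    - surprisal p (fun a => ((f a, g a), h a)) a - surprisal p h a

lemma I2_eq_sum_pmi [Fintype β] [Fintype γ] (p : α → ℝ) (f : α → β) (g : α → γ) :
    I2 p f g = ∑ a, p a * pmi p f g a := by
  simp only [I2, pmi, H_eq_sum_surprisal, mul_add, mul_sub, Finset.sum_add_distrib,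
    Finset.sum_sub_distrib]

lemma Ic_eq_sum_pcmi [Fintype β] [Fintype γ] [Fintype δ] (p : α → ℝ) (f : α → β) (g : α → γ)
    (h : α → δ) :
    Ic p f g h = ∑ a, p a * pcmi p f g h a := by
  simp only [Ic, Hc, pcmi, H_eq_sum_surprisal, mul_add, mul_sub, Finset.sum_add_distrib,
    Finset.sum_sub_distrib]
  ring

lemma pmi_comm (p : α → ℝ) (f : α → β) (g : α → γ) (a : α) : pmi p f g a = pmi p g f a := by
  rw [pmi, pmi, surprisal_congr (f := fun a => (f a, g a)) (g := fun a => (g a, f a))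
    fun _ _ => by simp only [Prod.mk.injEq, and_comm]]
  ring

lemma pcmi_comm (p : α → ℝ) (f : α → β) (g : α → γ) (h : α → δ) (a : α) :
    pcmi p f g h a = pcmi p g f h a := by
  rw [pcmi, pcmi, surprisal_congr (f := fun a => ((f a, g a), h a))
    (g := fun a => ((g a, f a), h a)) fun _ _ => by simp only [Prod.mk.injEq, and_comm]]
  ring

lemma pcmi_sub_pmi_of_determined {f : α → β} {g : α → γ} (h : α → δ) {C : α → ε} {a : α}
    (hgf : ∀ a', p a' ≠ 0 → g a' = g a → f a' = f a)
    (hC : ∀ a', p a' ≠ 0 → (C a' = C a ↔ f a' = f a)) :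
    pcmi p f g h a - pmi p f g a = -pmi p C h a := by
  have hfgh : surprisal p (fun a => ((f a, g a), h a)) a = surprisal p (fun a => (g a, h a)) a :=
    surprisal_congr fun a' ha' => by
      simp only [Prod.mk.injEq]
      have := hgf a' ha'
      tauto
  have hfg : surprisal p (fun a => (f a, g a)) a = surprisal p g a :=
    surprisal_congr fun a' ha' => by
      simp only [Prod.mk.injEq]
      have := hgf a' ha'
      tauto
  have hfh : surprisal p (fun a => (f a, h a)) a = surprisal p (fun a => (C a, h a)) a :=
    surprisal_congr fun a' ha' => by simp only [Prod.mk.injEq, hC a' ha']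
  have hf : surprisal p f a = surprisal p C a :=
    surprisal_congr fun a' ha' => (hC a' ha').symm
  rw [pcmi, pmi, pmi, hfgh, hfg, hfh, hf]
  ring

lemma I2_nonneg [Fintype β] [Fintype γ] (hp : IsPMF p) (f : α → β) (g : α → γ) :
    0 ≤ I2 p f g := by
  set F := fun a => (f a, g a)
  have hFf : ∀ bc, dist p F bc ≤ dist p f bc.1 := fun bc =>
    dist_mono hp.1 fun a h => congrArg Prod.fst h
  have hFg : ∀ bc, dist p F bc ≤ dist p g bc.2 := fun bc =>
    dist_mono hp.1 fun a h => congrArg Prod.snd h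
  have hprod : ∑ bc : β × γ, dist p f bc.1 * dist p g bc.2 = ∑ bc, dist p F bc := by
    rw [Fintype.sum_prod_type, ← Finset.sum_mul_sum, sum_dist, sum_dist, sum_dist, hp.2, one_mul]
  calc 0 ≤ -∑ bc, dist p F bc * Real.logb 2 (dist p f bc.1 * dist p g bc.2 / dist p F bc) :=
        neg_nonneg.2 <| gibbs_le (dist_nonneg hp.1 F)
          (fun bc => mul_nonneg (dist_nonneg hp.1 f _) (dist_nonneg hp.1 g _))
          (fun bc h => by
            rcases mul_eq_zero.1 h with h | h
            · exact le_antisymm (h ▸ hFf bc) (dist_nonneg hp.1 F bc)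
            · exact le_antisymm (h ▸ hFg bc) (dist_nonneg hp.1 F bc))
          hprod.le
    _ = ∑ bc, dist p F bc * (-Real.logb 2 (dist p f bc.1) - Real.logb 2 (dist p g bc.2)
          + Real.logb 2 (dist p F bc)) := by
        rw [← Finset.sum_neg_distrib]
        refine Finset.sum_congr rfl fun bc _ => ?_
        rcases (dist_nonneg hp.1 F bc).eq_or_lt with h | h
        · simp [← h]
        rw [Real.logb_div (mul_pos (h.trans_le (hFf bc)) (h.trans_le (hFg bc))).ne' h.ne',
          Real.logb_mul (h.trans_le (hFf bc)).ne' (h.trans_le (hFg bc)).ne']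
        ring
    _ = I2 p f g := by
        rw [I2_eq_sum_pmi, sum_dist_mul]
        exact Finset.sum_congr rfl fun a _ => by simp only [pmi, surprisal, F]; ring

lemma I2_eq_zero_of_indep [Fintype β] [Fintype γ] (hp : ∀ a, 0 ≤ p a) {f : α → β} {g : α → γ}
    (h : Indep p f g) : I2 p f g = 0 := by
  rw [I2_eq_sum_pmi]
  refine (sum_mul_congr_of_ne_zero (v := fun _ => 0) fun a ha => ?_).trans (by simp)
  rw [pmi, surprisal, surprisal, surprisal, h, Real.logb_mul (dist_apply_pos hp f ha).ne'
    (dist_apply_pos hp g ha).ne']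
  ring

lemma Ic_sub_I2_comm [Fintype β] [Fintype γ] [Fintype δ] (p : α → ℝ) (f : α → β) (g : α → γ)
    (h : α → δ) :
    Ic p f g h - I2 p f g = Ic p f h g - I2 p f h := by
  have h₁ : H p (fun a => ((f a, g a), h a)) = H p (fun a => ((f a, h a), g a)) :=
    H_congr fun _ _ _ _ => by simp only [Prod.mk.injEq]; tauto
  have h₂ : H p (fun a => (g a, h a)) = H p (fun a => (h a, g a)) :=
    H_congr fun _ _ _ _ => by simp only [Prod.mk.injEq]; tauto
  simp only [Ic, Hc, I2, h₁, h₂]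
  ring

lemma Ic_eq_I2_of_subsingleton [Fintype β] [Fintype γ] [Fintype δ] [Subsingleton δ]
    (hp : ∑ a, p a = 1) (f : α → β) (g : α → γ) (h : α → δ) : Ic p f g h = I2 p f g := by
  have hdrop : ∀ {ζ : Type} [Fintype ζ] (k : α → ζ), H p (fun a => (k a, h a)) = H p k :=
    fun k => H_congr fun a _ a' _ => by simp [Subsingleton.elim (h a') (h a)]
  simp only [Ic, Hc, I2, hdrop, H_eq_zero_of_subsingleton hp]
  ring

end MutualInformation

section Auxiliary

variable {X Y U : Type} [Fintype X] [Fintype Y] [Fintype U] {p : X × Y → ℝ}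
  {q : X × Y × U → ℝ}

lemma IsAux.dist_cXY (hq : IsAux p q) : dist q cXY = p := by
  funext ⟨x, y⟩
  rw [← hq.2 x y]
  simp only [dist, cXY, Fintype.sum_prod_type]
  simp [ite_and]

lemma IsAux.H_comp_cXY (hq : IsAux p q) {β : Type} [Fintype β] (F : X × Y → β) :
    H q (fun a => F (cXY a)) = H p F := by
  rw [H_comp, hq.dist_cXY]

lemma IsAux.I2_fst_snd_eq (hq : IsAux p q) : I2 p Prod.fst Prod.snd = I2 q cX cY := by
  rw [I2, ← hq.H_comp_cXY, ← hq.H_comp_cXY, ← hq.H_comp_cXY]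
  rfl

lemma IsAux.ne_zero (hq : IsAux p q) {a : X × Y × U} (ha : q a ≠ 0) : p (cXY a) ≠ 0 := by
  rw [← congrFun hq.dist_cXY]
  exact (dist_apply_pos hq.1.1 cXY ha).ne'

lemma IsAux.Ic_le_H_snd (hq : IsAux p q) : Ic q cX cY cU ≤ H p Prod.snd := by
  have hXU : H q (fun a => (cX a, cU a)) ≤ H q (fun a => ((cX a, cY a), cU a)) :=
    H_comp_le hq.1.1 (fun a => ((cX a, cY a), cU a)) fun b => (b.1.1, b.2)
  have hYU := I2_nonneg hq.1 cY cU
  have hY : H q cY = H p Prod.snd := hq.H_comp_cXY Prod.snd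
  simp only [Ic, Hc, I2] at hYU ⊢
  linarith

lemma dist_cU_cX_apply (q : X × Y × U → ℝ) (u : U) (x : X) :
    dist q (fun a => (cU a, cX a)) (u, x) = ∑ y, q (x, y, u) := by
  simp only [dist, cU, cX, Fintype.sum_prod_type]
  simp [ite_and]

lemma dist_cU_cY_apply (q : X × Y × U → ℝ) (u : U) (y : Y) :
    dist q (fun a => (cU a, cY a)) (u, y) = ∑ x, q (x, y, u) := by
  simp only [dist, cU, cY, Fintype.sum_prod_type]
  simp [ite_and]

lemma IsAux.dist_cY (hq : IsAux p q) (y : Y) :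
    dist q cY y = ∑ x, p (x, y) := by
  rw [← dist_snd_apply, ← hq.dist_cXY, ← dist_comp]
  rfl

lemma dist_cX_cU_cY_apply (q : X × Y × U → ℝ) (a : X × Y × U) :
    dist q (fun a => ((cX a, cU a), cY a)) ((cX a, cU a), cY a) = q a := by
  simp only [dist, cX, cY, cU, Fintype.sum_prod_type]
  simp [ite_and]

end Auxiliary

section ConditionalMutualInformation

variable {X Y U : Type} [Fintype X] [Fintype Y] [Fintype U] {q : X × Y × U → ℝ}

lemma Ic_cX_cU_cY_pos (hq : IsPMF q) {x : X} {y : Y} {u : U} (h₀ : q (x, y, u) ≠ 0)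
    (hne : q (x, y, u) * dist q cY y ≠
      dist q cXY (x, y) * dist q (fun a => (cU a, cY a)) (u, y)) :
    0 < Ic q cX cU cY := by
  -- the law under which `X` and `U` are conditionally independent given `Y`
  set B : X × Y × U → ℝ := fun a =>
    dist q cXY (cXY a) * dist q (fun a => (cU a, cY a)) (cU a, cY a) / dist q cY (cY a)
  have hpos : ∀ a, q a ≠ 0 → 0 < dist q cXY (cXY a) ∧
      0 < dist q (fun a => (cU a, cY a)) (cU a, cY a) ∧ 0 < dist q cY (cY a) := fun a ha =>
    ⟨dist_apply_pos hq.1 _ ha, dist_apply_pos hq.1 _ ha, dist_apply_pos hq.1 _ ha⟩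
  have hB : ∀ a, q a ≠ 0 → pcmi q cX cU cY a = -Real.logb 2 (B a / q a) := fun a ha => by
    obtain ⟨h₁, h₂, h₃⟩ := hpos a ha
    simp only [pcmi, surprisal, dist_cX_cU_cY_apply, B]
    rw [Real.logb_div (by positivity) ha, Real.logb_div (by positivity) h₃.ne',
      Real.logb_mul h₁.ne' h₂.ne']
    have hXY : dist q (fun a => (cX a, cY a)) (cX a, cY a) = dist q cXY (cXY a) := rfl
    rw [hXY]
    ring
  have hBnn : ∀ a, 0 ≤ B a := fun a =>
    div_nonneg (mul_nonneg (dist_nonneg hq.1 _ _) (dist_nonneg hq.1 _ _)) (dist_nonneg hq.1 _ _)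
  have hBq : ∀ a, B a = 0 → q a = 0 := fun a hBa => by
    by_contra ha
    obtain ⟨h₁, h₂, h₃⟩ := hpos a ha
    exact (div_pos (mul_pos h₁ h₂) h₃).ne' hBa
  have hBsum : ∑ a, B a = ∑ a, q a := by
    calc ∑ a, B a = ∑ y, (∑ x, dist q (fun a => (cX a, cY a)) (x, y))
          * (∑ u, dist q (fun a => (cU a, cY a)) (u, y)) / dist q cY y := by
          simp only [B, Fintype.sum_prod_type, Finset.sum_mul_sum, Finset.sum_div]
          exact Finset.sum_comm
      _ = ∑ a, q a := by
          simp only [sum_dist_pair_fst, mul_self_div_self, sum_dist]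
  have hqB : q (x, y, u) ≠ B (x, y, u) := fun h => hne <| by
    rw [h]
    exact div_mul_cancel₀ _ (hpos _ h₀).2.2.ne'
  rw [Ic_eq_sum_pcmi, sum_mul_congr_of_ne_zero hB]
  simp only [mul_neg, Finset.sum_neg_distrib, neg_pos]
  exact gibbs_lt hq.1 hBnn hBq hBsum.le h₀ hqB

end ConditionalMutualInformation

section Suprema

variable {X Y : Type} [Fintype X] [Fintype Y] {p : X × Y → ℝ}

lemma le_GNNI {U : Type} [Fintype U] {q : X × Y × U → ℝ} (hq : IsAux p q) :
    Ic q cX cY cU - I2 p Prod.fst Prod.snd ≤ GNNI p :=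
  le_csSup ⟨H p Prod.snd - I2 p Prod.fst Prod.snd, by
    rintro r ⟨U, _, q, hq, rfl⟩
    exact sub_le_sub_right hq.Ic_le_H_snd _⟩ ⟨U, inferInstance, q, hq, rfl⟩

lemma le_GPNI {U : Type} [Fintype U] {q : X × Y × U → ℝ} (hq : IsAux p q)
    (hind : Indep q cU cX) : Ic q cX cY cU - I2 p Prod.fst Prod.snd ≤ GPNI p :=
  le_csSup ⟨H p Prod.snd - I2 p Prod.fst Prod.snd, by
    rintro r ⟨U, _, q, hq, -, rfl⟩
    exact sub_le_sub_right hq.Ic_le_H_snd _⟩ ⟨U, inferInstance, q, hq, hind, rfl⟩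

def constAux (p : X × Y → ℝ) : X × Y × Unit → ℝ := fun a => p (cXY a)

lemma isAux_constAux (hp : IsPMF p) : IsAux p (constAux p) := by
  refine ⟨⟨fun a => hp.1 _, ?_⟩, fun x y => by simp [constAux, cXY]⟩
  simpa [constAux, cXY, Fintype.sum_prod_type] using hp.2

lemma indep_constAux (hp : IsPMF p) : Indep (constAux p) cU cX :=
  indep_of_subsingleton (isAux_constAux hp).1.2 _ _

lemma Ic_constAux_sub_I2 (hp : IsPMF p) :
    Ic (constAux p) cX cY cU - I2 p Prod.fst Prod.snd = 0 := by
  rw [Ic_eq_I2_of_subsingleton (isAux_constAux hp).1.2, (isAux_constAux hp).I2_fst_snd_eq,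
    sub_self]

lemma GPNI_nonneg (hp : IsPMF p) : 0 ≤ GPNI p :=
  Ic_constAux_sub_I2 hp ▸ le_GPNI (isAux_constAux hp) (indep_constAux hp)

lemma GPNI_le_GNNI (hp : IsPMF p) : GPNI p ≤ GNNI p :=
  csSup_le ⟨0, Unit, inferInstance, constAux p, isAux_constAux hp, indep_constAux hp,
    (Ic_constAux_sub_I2 hp).symm⟩ fun _ ⟨_, _, _, hq, _, hr⟩ => hr ▸ le_GNNI hq

lemma GNNI_le_of_forall (hp : IsPMF p) {c : ℝ}
    (h : ∀ (U : Type) [Fintype U] (q : X × Y × U → ℝ), IsAux p q →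
      Ic q cX cY cU - I2 p Prod.fst Prod.snd ≤ c) : GNNI p ≤ c :=
  csSup_le ⟨0, Unit, inferInstance, constAux p, isAux_constAux hp,
    (Ic_constAux_sub_I2 hp).symm⟩ fun _ ⟨U, _, q, hq, hr⟩ => hr ▸ h U q hq

end Suprema

section StarForest

variable {X Y : Type} {p : X × Y → ℝ}

/-- The bipartite graph on `X ⊕ Y` with an edge `x — y` whenever `p (x, y) ≠ 0` is a disjoint
union of stars: it has no path `x — y — x' — y'` with `x ≠ x'` and `y ≠ y'`. -/
def IsStarForest (p : X × Y → ℝ) : Prop :=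
  ∀ x x' y y', p (x, y) ≠ 0 → p (x', y) ≠ 0 → p (x', y') ≠ 0 → x = x' ∨ y = y'

def starCenter (p : X × Y → ℝ) (xy : X × Y) : X ⊕ Y :=
  if ∃ x', x' ≠ xy.1 ∧ p (x', xy.2) ≠ 0 then Sum.inr xy.2 else Sum.inl xy.1

lemma IsStarForest.starCenter_spec (hstar : IsStarForest p) {x : X} {y : Y}
    (hxy : p (x, y) ≠ 0) :
    (∀ x' y', p (x', y') ≠ 0 →
      (y' = y → x' = x) ∧ (starCenter p (x', y') = starCenter p (x, y) ↔ x' = x)) ∨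
    (∀ x' y', p (x', y') ≠ 0 →
      (x' = x → y' = y) ∧ (starCenter p (x', y') = starCenter p (x, y) ↔ y' = y)) := by
  by_cases hshared : ∃ x', x' ≠ x ∧ p (x', y) ≠ 0
  · obtain ⟨x₀, hx₀, hp₀⟩ := hshared
    have hC : starCenter p (x, y) = Sum.inr y := if_pos ⟨x₀, hx₀, hp₀⟩
    refine Or.inr fun x' y' h' => ⟨?_, ?_⟩
    · rintro rfl
      exact ((hstar x₀ x' y y' hp₀ hxy h').resolve_left hx₀).symm
    rw [hC, starCenter]
    split_ifs with h
    · exact Sum.inr_injective.eq_iff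
    · simp only [false_iff]
      rintro rfl
      by_cases hx' : x' = x₀
      · exact h ⟨x, hx' ▸ hx₀.symm, hxy⟩
      · exact h ⟨x₀, Ne.symm hx', hp₀⟩
  · push Not at hshared
    have hC : starCenter p (x, y) = Sum.inl x := if_neg (by push Not; exact hshared)
    refine Or.inl fun x' y' h' => ⟨?_, ?_⟩
    · rintro rfl
      by_contra hne
      exact h' (hshared x' hne)
    rw [hC, starCenter]
    split_ifs with h
    · simp only [false_iff]
      rintro rfl
      obtain ⟨x₀, hx₀, hp₀⟩ := h
      rcases hstar x₀ x' y' y hp₀ h' hxy with h | rfl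
      · exact hx₀ h
      · exact hp₀ (hshared x₀ hx₀)
    · exact Sum.inl_injective.eq_iff

lemma IsStarForest.Ic_sub_I2_eq [Fintype X] [Fintype Y] (hstar : IsStarForest p)
    {U : Type} [Fintype U] {q : X × Y × U → ℝ} (hq : IsAux p q) :
    Ic q cX cY cU - I2 p Prod.fst Prod.snd = -I2 q (fun a => starCenter p (cXY a)) cU := by
  rw [hq.I2_fst_snd_eq, Ic_eq_sum_pcmi, I2_eq_sum_pmi, I2_eq_sum_pmi, ← Finset.sum_sub_distrib,
    ← Finset.sum_neg_distrib]
  simp only [← mul_sub, ← mul_neg]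
  refine sum_mul_congr_of_ne_zero fun a ha => ?_
  have hsupp : ∀ a', q a' ≠ 0 → p (cX a', cY a') ≠ 0 := fun a' ha' => hq.ne_zero ha'
  rcases hstar.starCenter_spec (hq.ne_zero ha) with h | h
  · exact pcmi_sub_pmi_of_determined cU (fun a' ha' => (h _ _ (hsupp a' ha')).1)
      fun a' ha' => (h _ _ (hsupp a' ha')).2
  · rw [pcmi_comm, pmi_comm]
    exact pcmi_sub_pmi_of_determined cU (fun a' ha' => (h _ _ (hsupp a' ha')).1)
      fun a' ha' => (h _ _ (hsupp a' ha')).2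

lemma IsStarForest.GNNI_nonpos [Fintype X] [Fintype Y] (hstar : IsStarForest p)
    (hp : IsPMF p) : GNNI p ≤ 0 :=
  GNNI_le_of_forall hp fun _ _ _ hq => by
    rw [hstar.Ic_sub_I2_eq hq, neg_nonpos]
    exact I2_nonneg hq.1 _ _

end StarForest

section BernoulliAux

variable {X Y : Type} {p k : X × Y → ℝ}

def bernoulliAux (p k : X × Y → ℝ) : X × Y × Bool → ℝ :=
  fun a => p (cXY a) * if cU a then k (cXY a) else 1 - k (cXY a)

lemma bernoulliAux_apply (x : X) (y : Y) (u : Bool) :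
    bernoulliAux p k (x, y, u) = p (x, y) * if u then k (x, y) else 1 - k (x, y) := rfl

lemma isAux_bernoulliAux [Fintype X] [Fintype Y] (hp : IsPMF p)
    (hk : ∀ xy, 0 ≤ k xy ∧ k xy ≤ 1) : IsAux p (bernoulliAux p k) := by
  have hmarg : ∀ x y, ∑ u, bernoulliAux p k (x, y, u) = p (x, y) := fun x y => by
    simp only [Fintype.sum_bool, bernoulliAux_apply, if_true, Bool.false_eq_true, if_false]
    ring
  refine ⟨⟨fun a => mul_nonneg (hp.1 _) ?_, ?_⟩, hmarg⟩
  · split_ifs <;> linarith [hk (cXY a)]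
  · simp only [Fintype.sum_prod_type, hmarg]
    simpa only [Fintype.sum_prod_type] using hp.2

lemma indep_bernoulliAux [Fintype X] [Fintype Y] (hp : IsPMF p) {t : ℝ}
    (hrow : ∀ x, ∑ y, p (x, y) * k (x, y) = t * ∑ y, p (x, y)) :
    Indep (bernoulliAux p k) cU cX := by
  set c : Bool → ℝ := fun u => if u then t else 1 - t
  have hjoint : ∀ u x, dist (bernoulliAux p k) (fun a => (cU a, cX a)) (u, x) =
      c u * ∑ y, p (x, y) := fun u x => by
    rw [dist_cU_cX_apply]
    cases u <;> simp [c, bernoulliAux_apply, mul_sub, Finset.sum_sub_distrib, hrow, sub_mul]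
  have hX : ∑ x, ∑ y, p (x, y) = 1 := by simpa only [Fintype.sum_prod_type] using hp.2
  intro u x
  have hU : dist (bernoulliAux p k) cU u = c u := by
    rw [← sum_dist_pair_snd (g := cX)]
    simp only [hjoint, ← Finset.mul_sum, hX, mul_one]
  have hX' : dist (bernoulliAux p k) cX x = ∑ y, p (x, y) := by
    rw [← sum_dist_pair_fst (f := cU)]
    simp only [hjoint, Fintype.sum_bool, c, if_true, Bool.false_eq_true, if_false]
    ring
  rw [hjoint, hU, hX']

/-- `P(U = true | X, Y)` for a path `x₀ — y₀ — x₁ — y₁` in the support: the two perturbations of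
`1 / 2` cancel along the row `x₁`, which keeps `U` independent of `X`. -/
def pathKernel (p : X × Y → ℝ) (x₁ : X) (y₀ y₁ : Y) (xy : X × Y) : ℝ :=
  1 / 2 + if xy.1 = x₁ then
    ((if xy.2 = y₀ then p (x₁, y₁) else 0) - (if xy.2 = y₁ then p (x₁, y₀) else 0)) / 2 else 0

end BernoulliAux

section PathKernel

variable {X Y : Type} {p : X × Y → ℝ} {x₁ : X} {y₀ y₁ : Y}

lemma pathKernel_mem_Icc [Fintype X] [Fintype Y] (hp : IsPMF p) (xy : X × Y) :
    0 ≤ pathKernel p x₁ y₀ y₁ xy ∧ pathKernel p x₁ y₀ y₁ xy ≤ 1 := by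
  have hp₁ : ∀ xy, p xy ≤ 1 := fun xy =>
    hp.2 ▸ Finset.single_le_sum (fun xy _ => hp.1 xy) (Finset.mem_univ xy)
  simp only [pathKernel]
  split_ifs <;> constructor <;>
    linarith [hp₁ (x₁, y₀), hp₁ (x₁, y₁), hp.1 (x₁, y₀), hp.1 (x₁, y₁)]

lemma sum_mul_pathKernel_row [Fintype Y] (x : X) :
    ∑ y, p (x, y) * pathKernel p x₁ y₀ y₁ (x, y) = 1 / 2 * ∑ y, p (x, y) := by
  simp only [pathKernel]
  split_ifs with h
  · subst h
    simp only [mul_add, mul_div_assoc', mul_sub, mul_ite, mul_zero, sub_div,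
      Finset.sum_add_distrib, Finset.sum_sub_distrib, ← Finset.sum_div, Finset.sum_ite_eq',
      Finset.mem_univ, if_true, ← Finset.sum_mul]
    ring
  · simp [Finset.mul_sum, mul_comm]

lemma sum_mul_pathKernel_col [Fintype X] (hy : y₀ ≠ y₁) :
    ∑ x, p (x, y₀) * pathKernel p x₁ y₀ y₁ (x, y₀) =
      (∑ x, p (x, y₀)) / 2 + p (x₁, y₀) * p (x₁, y₁) / 2 := by
  simp only [pathKernel, if_true, hy, if_false, sub_zero, mul_add, mul_ite, mul_zero,
    Finset.sum_add_distrib, Finset.sum_ite_eq', Finset.mem_univ, ← Finset.sum_mul]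
  ring

lemma pathKernel_apply (hy : y₀ ≠ y₁) :
    pathKernel p x₁ y₀ y₁ (x₁, y₀) = 1 / 2 + p (x₁, y₁) / 2 := by
  simp [pathKernel, hy]

end PathKernel

section NotStarForest

variable {X Y : Type} [Fintype X] [Fintype Y] {p : X × Y → ℝ}

lemma exists_indep_aux_of_not_isStarForest (hp : IsPMF p) (hns : ¬IsStarForest p) :
    ∃ q : X × Y × Bool → ℝ, IsAux p q ∧ Indep q cU cX ∧
      0 < Ic q cX cY cU - I2 p Prod.fst Prod.snd := by
  simp only [IsStarForest, not_forall, not_or] at hns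
  obtain ⟨x₀, x₁, y₀, y₁, h₀₀, h₁₀, h₁₁, hx, hy⟩ := hns
  have hq := isAux_bernoulliAux hp (pathKernel_mem_Icc (x₁ := x₁) (y₀ := y₀) (y₁ := y₁) hp)
  have hind := indep_bernoulliAux hp (sum_mul_pathKernel_row (x₁ := x₁) (y₀ := y₀) (y₁ := y₁))
  refine ⟨_, hq, hind, ?_⟩
  have hP : p (x₀, y₀) + p (x₁, y₀) ≤ ∑ x, p (x, y₀) := by
    rw [← Finset.sum_pair (f := fun x => p (x, y₀)) hx]
    exact Finset.sum_le_sum_of_subset_of_nonneg (Finset.subset_univ _) fun _ _ _ => hp.1 _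
  have hpos₀₀ := (hp.1 (x₀, y₀)).lt_of_ne (Ne.symm h₀₀)
  have hpos₁₀ := (hp.1 (x₁, y₀)).lt_of_ne (Ne.symm h₁₀)
  have hpos₁₁ := (hp.1 (x₁, y₁)).lt_of_ne (Ne.symm h₁₁)
  rw [hq.I2_fst_snd_eq, Ic_sub_I2_comm, I2_eq_zero_of_indep hq.1.1 hind.symm, sub_zero]
  refine Ic_cX_cU_cY_pos hq.1 (x := x₁) (y := y₀) (u := true) ?_ ?_
  · rw [bernoulliAux_apply, if_pos rfl, pathKernel_apply hy]
    positivity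
  · rw [hq.dist_cY, congrFun hq.dist_cXY, dist_cU_cY_apply]
    simp only [bernoulliAux_apply, if_true, pathKernel_apply hy, sum_mul_pathKernel_col hy]
    intro h
    have hzero : p (x₁, y₀) * p (x₁, y₁) * (∑ x, p (x, y₀) - p (x₁, y₀)) = 0 := by
      linear_combination 2 * h
    have hgap : 0 < ∑ x, p (x, y₀) - p (x₁, y₀) := by linarith
    exact (by positivity : 0 < p (x₁, y₀) * p (x₁, y₁) * (∑ x, p (x, y₀) - p (x₁, y₀))).ne'
      hzero

end NotStarForest

/-- `G_PNI(X→Y) = 0` if and only if `G_NNI(X;Y) = 0`. -/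
theorem stmt11 {X Y : Type} [Fintype X] [Fintype Y] (p : X × Y → ℝ) (hp : IsPMF p) :
    GPNI p = 0 ↔ GNNI p = 0 := by
  have h₀ := GPNI_nonneg hp
  have hle := GPNI_le_GNNI hp
  by_cases hstar : IsStarForest p
  · have := hstar.GNNI_nonpos hp
    constructor <;> intro <;> linarith
  · obtain ⟨q, hq, hind, hpos⟩ := exists_indep_aux_of_not_isStarForest hp hstar
    have := le_GPNI hq hind
    constructor <;> intro <;> linarith

end GW
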